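/- Let (X_i, Y_{i1}, Y_{i2}), i = 1,...,n, be i.i.d. copies of a triple (X, Y_1, Y_2) satisfying condition (G1), and for j ∈ {1,2} let F̂_{n,j} be estimators of the conditional margins (measurable functions of the sample and of (y,x)) satisfying conditions (H1) and (H2). Then for each j ∈ {1,2} and each γ ∈ (0,1/2), sup_{u ∈ [γ,1−γ], x ∈ S_X} | F_j( F̂_{n,j}⁻(u|x) | x ) − u | = o_P(n^{−1/4}) as n → ∞, where F̂_{n,j}⁻(u|x) = inf{y ∈ ℝ : F̂_{n,j}(y|x) ≥ u}. -/

import Mathlib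

open MeasureTheory ProbabilityTheory Filter Set Topology

noncomputable section

/-- Generalized inverse `F⁻(u) = inf { y : F y ≥ u }`. -/
def genInv (F : ℝ → ℝ) (u : ℝ) : ℝ := sInf {y : ℝ | u ≤ F y}

/-- The Hölder regularity class `C_{k+δ,M}(S)`: `k` times differentiable, all
derivatives up to order `k` (including the function) bounded by `M`, and the
order-`k` derivative `δ`-Hölder with constant `M`. -/
def HClass {E : Type*} [NormedAddCommGroup E] [NormedSpace ℝ E]
    (k : ℕ) (δ M : ℝ) (S : Set E) (f : E → ℝ) : Prop :=
  ContDiffOn ℝ k f S ∧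
  (∀ l : ℕ, l ≤ k → ∀ z ∈ S, ‖iteratedFDerivWithin ℝ l f S z‖ ≤ M) ∧
  ∀ z ∈ S, ∀ z' ∈ S,
    ‖iteratedFDerivWithin ℝ k f S z - iteratedFDerivWithin ℝ k f S z'‖ ≤ M * ‖z - z'‖ ^ δ

/-- Basic kernel requirements of (G3): bounded, nonnegative, symmetric,
supported in `(-1,1)`, integrating to one. -/
def KernelBase (K : ℝ → ℝ) : Prop :=
  (∃ C, ∀ u, K u ≤ C) ∧ (∀ u, 0 ≤ K u) ∧ (∀ u, K (-u) = K u) ∧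
  (∀ u, u ∉ Set.Ioo (-1 : ℝ) 1 → K u = 0) ∧ (∫ u, K u) = 1

/-- (G3) requirements on the kernel `L`. -/
def KernelCondL (L : ℝ → ℝ) : Prop :=
  KernelBase L ∧ ContDiff ℝ 1 L ∧ (∃ C, ∀ u, |deriv L u| ≤ C) ∧
  BoundedVariationOn (deriv L) Set.univ

/-- (G3) requirements on the kernel `K`. -/
def KernelCondK (K : ℝ → ℝ) : Prop :=
  KernelBase K ∧ ContDiff ℝ 2 K ∧ (∃ C, ∀ u, |deriv (deriv K) u| ≤ C) ∧
  BoundedVariationOn (deriv (deriv K)) Set.univ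

/-- `φ_h(y, Y) = ∫_{-∞}^y h⁻¹ L((t-Y)/h) dt`. -/
def phiSm (L : ℝ → ℝ) (h y Y : ℝ) : ℝ := ∫ t in Set.Iic y, h⁻¹ * L ((t - Y) / h)

/-- `w_k(u) = u^k K(u)`. -/
def wk (K : ℝ → ℝ) (k : ℕ) (u : ℝ) : ℝ := u ^ k * K u

/-- `p̂_{n,k}(x)`. -/
def phat {Ω : Type*} (K : ℝ → ℝ) (h1 : ℕ → ℝ) (X : ℕ → Ω → ℝ)
    (n k : ℕ) (x : ℝ) (ω : Ω) : ℝ :=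
  (n : ℝ)⁻¹ * ∑ i ∈ Finset.range n, (h1 n)⁻¹ * wk K k ((x - X i ω) / h1 n)

/-- `Q̂_{n,k}(y,x)`. -/
def Qhat {Ω : Type*} (K L : ℝ → ℝ) (h1 h2 : ℕ → ℝ) (X Y : ℕ → Ω → ℝ)
    (n k : ℕ) (y x : ℝ) (ω : Ω) : ℝ :=
  (n : ℝ)⁻¹ * ∑ i ∈ Finset.range n,
    phiSm L (h2 n) y (Y i ω) * ((h1 n)⁻¹ * wk K k ((x - X i ω) / h1 n))

/-- The smoothed local linear estimator `F̂_n(y|x)` in closed form. -/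
def Fhat {Ω : Type*} (K L : ℝ → ℝ) (h1 h2 : ℕ → ℝ) (X Y : ℕ → Ω → ℝ)
    (n : ℕ) (y x : ℝ) (ω : Ω) : ℝ :=
  (Qhat K L h1 h2 X Y n 0 y x ω * phat K h1 X n 2 x ω
      - Qhat K L h1 h2 X Y n 1 y x ω * phat K h1 X n 1 x ω) /
    (phat K h1 X n 0 x ω * phat K h1 X n 2 x ω - (phat K h1 X n 1 x ω) ^ 2)

/-- Bandwidth conditions (G4'). -/
structure BandG4' (h1 h2 : ℕ → ℝ) : Prop where
  pos1 : ∀ n, 0 < h1 n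
  pos2 : ∀ n, 0 < h2 n
  to0₁ : Tendsto h1 atTop (𝓝 0)
  to0₂ : Tendsto h2 atTop (𝓝 0)
  r1 : Tendsto (fun n : ℕ => (n : ℝ) * h1 n ^ 3 / |Real.log (h1 n)|) atTop atTop
  r2 : Tendsto (fun n : ℕ => (n : ℝ) * (h1 n * h2 n) / |Real.log (h1 n * h2 n)|) atTop atTop

/-- Bandwidth conditions (G4), for a given `α > 0`. -/
structure BandG4 (h1 h2 : ℕ → ℝ) (α : ℝ) : Prop where
  αpos : 0 < α
  pos1 : ∀ n, 0 < h1 n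
  pos2 : ∀ n, 0 < h2 n
  b1 : Tendsto (fun n : ℕ => (n : ℝ) * h1 n ^ 8) atTop (𝓝 0)
  b2 : Tendsto (fun n : ℕ => (n : ℝ) * h2 n ^ 8) atTop (𝓝 0)
  b3 : Tendsto (fun n => h1 n ^ ((-1 : ℝ) - α / 2) * h2 n ^ 2) atTop (𝓝 0)
  b4 : Tendsto (fun n : ℕ => (n : ℝ) * h1 n ^ ((3 : ℝ) + α) / |Real.log (h1 n)|) atTop atTop
  b5 : Tendsto (fun n : ℕ => (n : ℝ) * h1 n ^ ((1 : ℝ) + α) * h2 n / |Real.log (h1 n * h2 n)|)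
        atTop atTop

/-- Bandwidth conditions (G4''), for a given `α > 0`. -/
structure BandG4'' (h1 h2 : ℕ → ℝ) (α : ℝ) : Prop where
  αpos : 0 < α
  pos1 : ∀ n, 0 < h1 n
  pos2 : ∀ n, 0 < h2 n
  to0₁ : Tendsto h1 atTop (𝓝 0)
  to0₂ : Tendsto h2 atTop (𝓝 0)
  b3 : Tendsto (fun n => h1 n ^ ((-1 : ℝ) - α / 2) * h2 n ^ 2) atTop (𝓝 0)
  b4 : Tendsto (fun n : ℕ => (n : ℝ) * h1 n ^ ((3 : ℝ) + α) / |Real.log (h1 n)|) atTop atTop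
  b5 : Tendsto (fun n : ℕ => (n : ℝ) * h1 n ^ ((1 : ℝ) + α) * h2 n / |Real.log (h1 n * h2 n)|)
        atTop atTop

/-- Marginal density of `X` from a joint density of `(X, Y₁, Y₂)`. -/
def fX3 (fXY : ℝ → ℝ → ℝ → ℝ) (x : ℝ) : ℝ := ∫ p : ℝ × ℝ, fXY x p.1 p.2

/-- Conditional margin `F₁(y|x)` from a joint density of `(X, Y₁, Y₂)`. -/
def F1c (fXY : ℝ → ℝ → ℝ → ℝ) (y x : ℝ) : ℝ :=
  (∫ z in Set.Iic y, ∫ t, fXY x z t) / fX3 fXY x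

/-- Conditional margin `F₂(y|x)` from a joint density of `(X, Y₁, Y₂)`. -/
def F2c (fXY : ℝ → ℝ → ℝ → ℝ) (y x : ℝ) : ℝ :=
  (∫ z in Set.Iic y, ∫ t, fXY x t z) / fX3 fXY x

/-- Conditional marginal density `f₁(y|x)`. -/
def f1c (fXY : ℝ → ℝ → ℝ → ℝ) (y x : ℝ) : ℝ := (∫ t, fXY x y t) / fX3 fXY x

/-- Conditional marginal density `f₂(y|x)`. -/
def f2c (fXY : ℝ → ℝ → ℝ → ℝ) (y x : ℝ) : ℝ := (∫ t, fXY x t y) / fX3 fXY x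

/-- Condition (G1) on the law of the triple `(X, Y₁, Y₂)`, described through
its joint density `fXY` on `S_X × ℝ²`, `S_X = (s0, s1)`. -/
structure CondG1T (fXY : ℝ → ℝ → ℝ → ℝ) (s0 s1 b M δ : ℝ) : Prop where
  hs : s0 < s1
  hb : 0 < b
  hM : 0 < M
  hδ0 : 0 < δ
  hδ1 : δ ≤ 1
  nonneg : ∀ x y1 y2, 0 ≤ fXY x y1 y2
  supp : ∀ x y1 y2, x ∉ Set.Ioo s0 s1 → fXY x y1 y2 = 0
  F1reg : HClass 3 δ M (Set.univ ×ˢ Set.Ioo s0 s1) (fun p : ℝ × ℝ => F1c fXY p.1 p.2)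
  F2reg : HClass 3 δ M (Set.univ ×ˢ Set.Ioo s0 s1) (fun p : ℝ × ℝ => F2c fXY p.1 p.2)
  fXreg : HClass 1 1 M (Set.Ioo s0 s1) (fX3 fXY)
  fXlb : ∀ x ∈ Set.Ioo s0 s1, b ≤ fX3 fXY x
  f1lb : ∀ γ ∈ Set.Ioo (0 : ℝ) (1 / 2), ∃ bγ > (0 : ℝ), ∀ x ∈ Set.Ioo s0 s1,
    ∀ y ∈ Set.Icc (genInv (fun z => F1c fXY z x) γ) (genInv (fun z => F1c fXY z x) (1 - γ)),
      bγ ≤ f1c fXY y x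
  f2lb : ∀ γ ∈ Set.Ioo (0 : ℝ) (1 / 2), ∃ bγ > (0 : ℝ), ∀ x ∈ Set.Ioo s0 s1,
    ∀ y ∈ Set.Icc (genInv (fun z => F2c fXY z x) γ) (genInv (fun z => F2c fXY z x) (1 - γ)),
      bγ ≤ f2c fXY y x

/-- The data `(X_i, Y_{i1}, Y_{i2})` are i.i.d. with common law of density `fXY`. -/
structure IIDLaw3 {Ω : Type*} [MeasurableSpace Ω] (P : Measure Ω)
    (X Y1 Y2 : ℕ → Ω → ℝ) (fXY : ℝ → ℝ → ℝ → ℝ) : Prop where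
  measX : ∀ i, Measurable (X i)
  measY1 : ∀ i, Measurable (Y1 i)
  measY2 : ∀ i, Measurable (Y2 i)
  indep : iIndepFun (fun i ω => (X i ω, Y1 i ω, Y2 i ω)) P
  ident : ∀ i, IdentDistrib (fun ω => (X i ω, Y1 i ω, Y2 i ω))
    (fun ω => (X 0 ω, Y1 0 ω, Y2 0 ω)) P P
  law : Measure.map (fun ω => (X 0 ω, Y1 0 ω, Y2 0 ω)) P
    = (volume : Measure (ℝ × ℝ × ℝ)).withDensity
        (fun p => ENNReal.ofReal (fXY p.1 p.2.1 p.2.2))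

/-- The (common) conditional copula,
`C(u₁,u₂) = P(F₁(Y₁|X) ≤ u₁, F₂(Y₂|X) ≤ u₂)`. -/
def copC {Ω : Type*} [MeasurableSpace Ω] (P : Measure Ω)
    (X Y1 Y2 : ℕ → Ω → ℝ) (fXY : ℝ → ℝ → ℝ → ℝ) (u : ℝ × ℝ) : ℝ :=
  (P {ω | F1c fXY (Y1 0 ω) (X 0 ω) ≤ u.1 ∧ F2c fXY (Y2 0 ω) (X 0 ω) ≤ u.2}).toReal

/-- Standard basis of `ℝ²`, used to express partial derivatives. -/
def bas2 : Fin 2 → ℝ × ℝ := ![((1 : ℝ), (0 : ℝ)), ((0 : ℝ), (1 : ℝ))]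

/-- Coordinates of a point of `ℝ²`. -/
def coord2 (p : ℝ × ℝ) : Fin 2 → ℝ := ![p.1, p.2]

/-- Condition (G2) on a copula `C` : twice continuously differentiable on the
open unit square with the weighted bound on its second-order partial
derivatives. -/
def CopulaG2 (C : ℝ × ℝ → ℝ) : Prop :=
  ContDiffOn ℝ 2 C (Set.Ioo 0 1 ×ˢ Set.Ioo 0 1) ∧
  ∃ κ > (0 : ℝ), ∀ p ∈ Set.Ioo (0 : ℝ) 1 ×ˢ Set.Ioo (0 : ℝ) 1, ∀ j k : Fin 2,
    |fderiv ℝ (fun q => fderiv ℝ C q (bas2 j)) p (bas2 k)| ≤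
      κ / Real.sqrt (coord2 p j * (1 - coord2 p j) * (coord2 p k * (1 - coord2 p k)))

/-- Empirical (marginal) distribution function `Ĝ_{n}` of the pseudo
observations built from a (possibly estimated) conditional margin `Fh`. -/
def Ghat {Ω : Type*} (Fh : ℕ → ℝ → ℝ → Ω → ℝ) (X Yj : ℕ → Ω → ℝ)
    (n : ℕ) (u : ℝ) (ω : Ω) : ℝ :=
  (n : ℝ)⁻¹ * ∑ i ∈ Finset.range n, if Fh n (Yj i ω) (X i ω) ω ≤ u then (1 : ℝ) else 0

/-- The empirical conditional copula `Ĉ_n` built from (possibly estimated)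
conditional margins `Fh1`, `Fh2`. -/
def Chat {Ω : Type*} (Fh1 Fh2 : ℕ → ℝ → ℝ → Ω → ℝ) (X Y1 Y2 : ℕ → Ω → ℝ)
    (n : ℕ) (u1 u2 : ℝ) (ω : Ω) : ℝ :=
  (n : ℝ)⁻¹ * ∑ i ∈ Finset.range n,
    (if Fh1 n (Y1 i ω) (X i ω) ω ≤ genInv (fun v => Ghat Fh1 X Y1 n v ω) u1
      then (1 : ℝ) else 0) *
    (if Fh2 n (Y2 i ω) (X i ω) ω ≤ genInv (fun v => Ghat Fh2 X Y2 n v ω) u2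
      then (1 : ℝ) else 0)

/-- Condition (H1) for an estimator `Fh` of the conditional margin `F`. -/
def CondH1 {Ω : Type*} [MeasurableSpace Ω] (P : Measure Ω) (s0 s1 : ℝ)
    (F : ℝ → ℝ → ℝ) (Fh : ℕ → ℝ → ℝ → Ω → ℝ) : Prop :=
  ∀ γ ∈ Set.Ioo (0 : ℝ) (1 / 2),
    Tendsto (fun n => P {ω | ∀ x ∈ Set.Ioo s0 s1,
        Continuous (fun y => Fh n y x ω) ∧
        StrictMonoOn (fun y => Fh n y x ω)
          (Set.Icc (genInv (fun z => F z x) γ) (genInv (fun z => F z x) (1 - γ)))})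
      atTop (𝓝 1)

/-- Condition (H2) for an estimator `Fh` of the conditional margin `F`:
`sup_{x ∈ S_X, y ∈ ℝ} |F̂_{n}(y|x) - F(y|x)| = o_P(n^{-1/4})`. -/
def CondH2 {Ω : Type*} [MeasurableSpace Ω] (P : Measure Ω) (s0 s1 : ℝ)
    (F : ℝ → ℝ → ℝ) (Fh : ℕ → ℝ → ℝ → Ω → ℝ) : Prop :=
  ∀ ε > (0 : ℝ),
    Tendsto (fun n : ℕ => P {ω | ∃ x ∈ Set.Ioo s0 s1, ∃ y : ℝ,
        ε * (n : ℝ) ^ (-(1 / 4) : ℝ) < |Fh n y x ω - F y x|})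
      atTop (𝓝 0)

/-- Condition (H3) for an estimator `Fh` of a conditional margin. -/
def CondH3 {Ω : Type*} [MeasurableSpace Ω] (P : Measure Ω) (s0 s1 : ℝ)
    (Fh : ℕ → ℝ → ℝ → Ω → ℝ) : Prop :=
  ∀ γ ∈ Set.Ioo (0 : ℝ) (1 / 2), ∃ δ₁ > (0 : ℝ), ∃ M₁ > (0 : ℝ),
    Tendsto (fun n => P {ω | ∀ u ∈ Set.Icc γ (1 - γ),
        HClass 1 δ₁ M₁ (Set.Ioo s0 s1) (fun x => genInv (fun y => Fh n y x ω) u)})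
      atTop (𝓝 1)

/-! If `g` is uniformly within `η` of a continuous `f` running from `0` to `1`, then at
`y* = g⁻(u)` we have `g y < u` to the left of `y*` and `y*` is a limit of points where
`g ≥ u`; continuity of `f` transfers both to `|f y* - u| ≤ η`. Applied to `g = F̂_{n,j}(·|x)`
and `f = F_j(·|x)`, condition (H2) then gives the rate. -/

theorem abs_apply_genInv_sub_le {f g : ℝ → ℝ} {u η : ℝ} (hf : Continuous f)
    (hbot : Tendsto f atBot (𝓝 0)) (htop : Tendsto f atTop (𝓝 1))
    (hgf : ∀ y, |g y - f y| ≤ η) (hηu : η < u) (huη : u + η < 1) :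
    |f (genInv g u) - u| ≤ η := by
  unfold genInv
  set S := {y | u ≤ g y}
  have hne : S.Nonempty := by
    obtain ⟨y, hy⟩ := (htop.eventually (lt_mem_nhds huη)).exists
    exact ⟨y, show u ≤ g y by linarith [(abs_le.mp (hgf y)).1]⟩
  have hbdd : BddBelow S := by
    obtain ⟨y₀, hy₀⟩ :=
      (hbot.eventually (gt_mem_nhds (sub_pos.2 hηu))).exists_forall_of_atBot
    refine ⟨y₀, fun y (hy : u ≤ g y) => le_of_not_gt fun hlt => ?_⟩
    linarith [hy₀ y hlt.le, (abs_le.mp (hgf y)).2]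
  have hlow : u - η ≤ f (sInf S) := by
    refine closure_minimal (fun y (hy : u ≤ g y) => ?_) (isClosed_le continuous_const hf)
      (csInf_mem_closure hne hbdd)
    show u - η ≤ f y
    linarith [(abs_le.mp (hgf y)).2]
  have hup : f (sInf S) ≤ u + η := by
    have hleft : Iio (sInf S) ⊆ {y | f y ≤ u + η} := fun y hy => by
      have hyS : y ∉ S := notMem_of_lt_csInf hy hbdd
      have hgy : g y < u := not_le.mp hyS
      show f y ≤ u + η
      linarith [(abs_le.mp (hgf y)).1]
    refine closure_minimal hleft (isClosed_le hf continuous_const) ?_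
    rw [closure_Iio]
    exact self_mem_Iic
  exact abs_le.mpr ⟨by linarith, by linarith⟩

theorem tendsto_setIntegral_Iic_div_integral {h : ℝ → ℝ} (hh : ∫ z, h z ≠ 0) :
    Tendsto (fun y => (∫ z in Iic y, h z) / ∫ z, h z) atBot (𝓝 0) ∧
      Tendsto (fun y => (∫ z in Iic y, h z) / ∫ z, h z) atTop (𝓝 1) := by
  have hint : Integrable h := Integrable.of_integral_ne_zero hh
  constructor
  · simpa using (tendsto_integral_Iic_zero (f := h) (μ := volume) tendsto_id).div_const _
  · have h_top := ((aecover_Iic (μ := volume) tendsto_id).integral_tendsto_of_countably_generated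
      hint).div_const (∫ z, h z)
    rwa [div_self hh] at h_top

theorem HClass.continuous_prodMk_left {k : ℕ} {δ M : ℝ} {S : Set ℝ} {F : ℝ × ℝ → ℝ}
    (hF : HClass k δ M (univ ×ˢ S) F) {x : ℝ} (hx : x ∈ S) :
    Continuous fun y => F (y, x) :=
  hF.1.continuousOn.comp_continuous (continuous_id.prodMk continuous_const) fun _ => ⟨trivial, hx⟩

section Margins

variable {fXY : ℝ → ℝ → ℝ → ℝ} {s0 s1 b M δ : ℝ} {x : ℝ}

theorem CondG1T.fX3_ne_zero (hG1 : CondG1T fXY s0 s1 b M δ) (hx : x ∈ Ioo s0 s1) :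
    fX3 fXY x ≠ 0 :=
  (hG1.hb.trans_le (hG1.fXlb x hx)).ne'

theorem integrable_slice_of_fX3_ne_zero (hx : fX3 fXY x ≠ 0) :
    Integrable (fun p : ℝ × ℝ => fXY x p.1 p.2) (volume.prod volume) := by
  rw [← Measure.volume_eq_prod]
  exact Integrable.of_integral_ne_zero hx

theorem integral_integral_eq_fX3 (hx : fX3 fXY x ≠ 0) :
    ∫ z, ∫ t, fXY x z t = fX3 fXY x := by
  rw [fX3, Measure.volume_eq_prod]
  exact (integral_prod _ (integrable_slice_of_fX3_ne_zero hx)).symm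

theorem integral_integral_swap_eq_fX3 (hx : fX3 fXY x ≠ 0) :
    ∫ z, ∫ t, fXY x t z = fX3 fXY x := by
  rw [fX3, Measure.volume_eq_prod]
  exact (integral_prod_symm _ (integrable_slice_of_fX3_ne_zero hx)).symm

theorem CondG1T.tendsto_F1c (hG1 : CondG1T fXY s0 s1 b M δ) (hx : x ∈ Ioo s0 s1) :
    Tendsto (F1c fXY · x) atBot (𝓝 0) ∧ Tendsto (F1c fXY · x) atTop (𝓝 1) := by
  have hmass := integral_integral_eq_fX3 (hG1.fX3_ne_zero hx)
  have h := tendsto_setIntegral_Iic_div_integral (hmass ▸ hG1.fX3_ne_zero hx)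
  rwa [hmass] at h

theorem CondG1T.tendsto_F2c (hG1 : CondG1T fXY s0 s1 b M δ) (hx : x ∈ Ioo s0 s1) :
    Tendsto (F2c fXY · x) atBot (𝓝 0) ∧ Tendsto (F2c fXY · x) atTop (𝓝 1) := by
  have hmass := integral_integral_swap_eq_fX3 (hG1.fX3_ne_zero hx)
  have h := tendsto_setIntegral_Iic_div_integral (hmass ▸ hG1.fX3_ne_zero hx)
  rwa [hmass] at h

end Margins

theorem CondH2.tendsto_measure_genInv_error {Ω : Type*} [MeasurableSpace Ω] {P : Measure Ω}
    {s0 s1 : ℝ} {F : ℝ → ℝ → ℝ} {Fh : ℕ → ℝ → ℝ → Ω → ℝ} (hH2 : CondH2 P s0 s1 F Fh)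
    (hF : ∀ x ∈ Ioo s0 s1, Continuous (F · x) ∧
      Tendsto (F · x) atBot (𝓝 0) ∧ Tendsto (F · x) atTop (𝓝 1))
    {γ : ℝ} (hγ : 0 < γ) {ε : ℝ} (hε : 0 < ε) :
    Tendsto (fun n : ℕ => P {ω | ∃ u ∈ Icc γ (1 - γ), ∃ x ∈ Ioo s0 s1,
        ε * (n : ℝ) ^ (-(1 / 4) : ℝ) < |F (genInv (fun y => Fh n y x ω) u) x - u|})
      atTop (𝓝 0) := by
  have hrate : Tendsto (fun n : ℕ => ε * (n : ℝ) ^ (-(1 / 4) : ℝ)) atTop (𝓝 0) := by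
    simpa using ((tendsto_rpow_neg_atTop (by norm_num)).comp
      tendsto_natCast_atTop_atTop).const_mul ε
  have hsub : ∀ᶠ n : ℕ in atTop,
      {ω | ∃ u ∈ Icc γ (1 - γ), ∃ x ∈ Ioo s0 s1,
        ε * (n : ℝ) ^ (-(1 / 4) : ℝ) < |F (genInv (fun y => Fh n y x ω) u) x - u|} ⊆
      {ω | ∃ x ∈ Ioo s0 s1, ∃ y : ℝ, ε * (n : ℝ) ^ (-(1 / 4) : ℝ) < |Fh n y x ω - F y x|} := by
    filter_upwards [hrate.eventually (gt_mem_nhds hγ)] with n hn ω ⟨u, hu, x, hx, hbad⟩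
    by_contra hclose
    simp only [mem_ofPred_eq, not_exists, not_and, not_lt] at hclose
    obtain ⟨hcont, hbot, htop⟩ := hF x hx
    exact hbad.not_ge (abs_apply_genInv_sub_le hcont hbot htop (hclose x hx)
      (hn.trans_le hu.1) (by linarith [hu.2]))
  refine tendsto_of_tendsto_of_tendsto_of_le_of_le' tendsto_const_nhds (hH2 ε hε)
    (Eventually.of_forall fun _ => zero_le) ?_
  filter_upwards [hsub] with n hn
  exact measure_mono hn

theorem stmt17
    {Ω : Type*} [MeasurableSpace Ω] (P : Measure Ω)
    (fXY : ℝ → ℝ → ℝ → ℝ) (s0 s1 b M δ : ℝ)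
    (hG1 : CondG1T fXY s0 s1 b M δ)
    (Fh1 Fh2 : ℕ → ℝ → ℝ → Ω → ℝ)
    (hH2₁ : CondH2 P s0 s1 (F1c fXY) Fh1) (hH2₂ : CondH2 P s0 s1 (F2c fXY) Fh2) :
    ∀ γ ∈ Set.Ioo (0 : ℝ) (1 / 2), ∀ ε > (0 : ℝ),
      Tendsto (fun n : ℕ => P {ω | ∃ u ∈ Set.Icc γ (1 - γ), ∃ x ∈ Set.Ioo s0 s1,
          ε * (n : ℝ) ^ (-(1 / 4) : ℝ) <
            |F1c fXY (genInv (fun y => Fh1 n y x ω) u) x - u|})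
        atTop (𝓝 0) ∧
      Tendsto (fun n : ℕ => P {ω | ∃ u ∈ Set.Icc γ (1 - γ), ∃ x ∈ Set.Ioo s0 s1,
          ε * (n : ℝ) ^ (-(1 / 4) : ℝ) <
            |F2c fXY (genInv (fun y => Fh2 n y x ω) u) x - u|})
        atTop (𝓝 0) := by
  intro γ hγ ε hε
  exact ⟨hH2₁.tendsto_measure_genInv_error
      (fun x hx => ⟨hG1.F1reg.continuous_prodMk_left hx, hG1.tendsto_F1c hx⟩) hγ.1 hε,
    hH2₂.tendsto_measure_genInv_error
      (fun x hx => ⟨hG1.F2reg.continuous_prodMk_left hx, hG1.tendsto_F2c hx⟩) hγ.1 hε⟩
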